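/- arXiv:2403.12822 — 2 statements merged into one kernel-verified Lean document; each statement's English description precedes it below -/
import Mathlib

section
/- With the setup of a parallel system of m linear limit states in standard normal space, the second moment of the conditional failure probability satisfies E[P(F_par | U_v)²] = Φ_{2m}(−[B; B]; [[R, R_v],[R_v, R]]), where F_par = ∩_{i=1}^m {αᵢᵀU ≥ βᵢ}, R = AAᵀ, R_v = A_v A_vᵀ, and Φ_{2m}(·; Σ) is the 2m-variate normal CDF with mean zero and covariance Σ. -/
/-!
Write `U = (X, Y)` with `X = U_v` and `Y = U_{∼v}` independent, of laws `ρ` and `σ`. By the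
freezing lemma, `P(F | U_v)` is `σ(F_X)`, where `F_x` is the section of `F` over `x`. Hence
`E[P(F | U_v)²] = ∫ σ(F_x)² dρ(x)` is the probability that `U` and `(U_v, U'_{∼v})` both lie in
`F`, for an independent copy `U'` of `U` (pick-freeze). On the Gaussian side,
`Mblock * (U, U') = (A U, A (U_v, U'_{∼v}))`, and the symmetry `w ↦ -w` of the standard Gaussian
turns `{Mblock w ≤ -[B; B]}` into `{[B; B] ≤ Mblock w}`.
-/

open MeasureTheory ProbabilityTheory

noncomputable def stdGaussian (ι : Type*) [Fintype ι] : Measure (ι → ℝ) :=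
  Measure.pi fun _ => gaussianReal 0 1

def Mblock (m n : ℕ) (A : Matrix (Fin m) (Fin n) ℝ) (v : Finset (Fin n)) :
    Matrix (Fin m ⊕ Fin m) (Fin n ⊕ Fin n) ℝ :=
  fun i j => match i, j with
  | .inl i, .inl j => A i j
  | .inl _, .inr _ => 0
  | .inr i, .inl j => if j ∈ v then A i j else 0
  | .inr i, .inr j => if j ∈ v then 0 else A i j

open scoped Matrix

section PickFreeze

variable {Ω α β : Type*} {mΩ : MeasurableSpace Ω} {mα : MeasurableSpace α}
  {mβ : MeasurableSpace β} {μ : Measure Ω} [IsProbabilityMeasure μ] {X : Ω → α} {Y : Ω → β}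
  {ρ : Measure α} {σ : Measure β} [IsProbabilityMeasure σ]

theorem condExp_comp_prodMk_ae_eq_integral [StandardBorelSpace β] (hX : Measurable X)
    (hY : Measurable Y) (hXY : μ.map (fun ω => (X ω, Y ω)) = ρ.prod σ) {F : α × β → ℝ}
    (hF : StronglyMeasurable F) (hFi : Integrable F (ρ.prod σ)) :
    μ[fun ω => F (X ω, Y ω) | mα.comap X] =ᵐ[μ] fun ω => ∫ y, F (X ω, y) ∂σ := by
  have : Nonempty β := nonempty_of_isProbabilityMeasure σ
  have hρ : μ.map X = ρ := by rw [← Measure.fst_map_prodMk hY, hXY, Measure.fst_prod]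
  have : IsProbabilityMeasure ρ := hρ ▸ Measure.isProbabilityMeasure_map hX.aemeasurable
  have hκ : condDistrib Y X μ =ᵐ[μ.map X] Kernel.const α σ :=
    condDistrib_ae_eq_of_measure_eq_compProd_of_measurable hX hY (by
      rw [hXY, hρ, Measure.compProd_const])
  have hFi' : Integrable (fun ω => F (X ω, Y ω)) μ := by
    rw [← hXY] at hFi
    exact hFi.comp_measurable (hX.prodMk hY)
  filter_upwards [condExp_prod_ae_eq_integral_condDistrib hX hY.aemeasurable hF hFi',
    ae_of_ae_map hX.aemeasurable hκ] with ω h1 h2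
  rw [h1, h2, Kernel.const_apply]

omit [IsProbabilityMeasure μ] in
theorem measure_pickFreeze_eq_lintegral_sq [IsProbabilityMeasure ρ] {S : Set (α × β)}
    (hS : MeasurableSet S) :
    ((ρ.prod σ).prod (ρ.prod σ)) {p | p.1 ∈ S ∧ (p.1.1, p.2.2) ∈ S} =
      ∫⁻ x, σ (Prod.mk x ⁻¹' S) ^ 2 ∂ρ := by
  have hT : MeasurableSet {p : (α × β) × (α × β) | p.1 ∈ S ∧ (p.1.1, p.2.2) ∈ S} :=
    (measurable_fst hS).inter ((measurable_fst.fst.prodMk measurable_snd.snd) hS)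
  have hsection : ∀ z : α × β, (ρ.prod σ) (Prod.mk z ⁻¹' {p | p.1 ∈ S ∧ (p.1.1, p.2.2) ∈ S}) =
      S.indicator (fun z => σ (Prod.mk z.1 ⁻¹' S)) z := by
    intro z
    by_cases hz : z ∈ S
    · have : Prod.mk z ⁻¹' {p : (α × β) × (α × β) | p.1 ∈ S ∧ (p.1.1, p.2.2) ∈ S} =
          Prod.snd ⁻¹' (Prod.mk z.1 ⁻¹' S) := by
        ext; simp [hz]
      rw [this, Set.indicator_of_mem hz]
      exact (measurePreserving_snd (μ := ρ) (ν := σ)).measure_preimage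
        (measurable_prodMk_left hS).nullMeasurableSet
    · simp [hz]
  have hfiber : ∀ x y, S.indicator (fun z => σ (Prod.mk z.1 ⁻¹' S)) (x, y) =
      (Prod.mk x ⁻¹' S).indicator (fun _ => σ (Prod.mk x ⁻¹' S)) y := fun _ _ => rfl
  have hmeas : Measurable fun z : α × β => σ (Prod.mk z.1 ⁻¹' S) :=
    (measurable_measure_prodMk_left hS).comp measurable_fst
  rw [Measure.prod_apply hT]
  simp_rw [hsection]
  rw [lintegral_prod _ (hmeas.indicator hS).aemeasurable]
  simp_rw [hfiber, lintegral_indicator_const (measurable_prodMk_left hS), sq]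

theorem integral_condExp_indicator_sq [StandardBorelSpace β] (hX : Measurable X)
    (hY : Measurable Y) (hXY : μ.map (fun ω => (X ω, Y ω)) = ρ.prod σ) {S : Set (α × β)}
    (hS : MeasurableSet S) :
    ∫ ω, (μ[fun ω => S.indicator (fun _ => (1 : ℝ)) (X ω, Y ω) | mα.comap X] ω) ^ 2 ∂μ =
      (μ.prod μ).real {p | (X p.1, Y p.1) ∈ S ∧ (X p.1, Y p.2) ∈ S} := by
  have hρ : μ.map X = ρ := by rw [← Measure.fst_map_prodMk hY, hXY, Measure.fst_prod]
  have : IsProbabilityMeasure ρ := hρ ▸ Measure.isProbabilityMeasure_map hX.aemeasurable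
  have hXYmp : MeasurePreserving (fun ω => (X ω, Y ω)) μ (ρ.prod σ) := ⟨hX.prodMk hY, hXY⟩
  have hT : MeasurableSet {p : (α × β) × (α × β) | p.1 ∈ S ∧ (p.1.1, p.2.2) ∈ S} :=
    (measurable_fst hS).inter ((measurable_fst.fst.prodMk measurable_snd.snd) hS)
  have hσS : Measurable fun x => σ (Prod.mk x ⁻¹' S) := measurable_measure_prodMk_left hS
  have hcond := condExp_comp_prodMk_ae_eq_integral hX hY hXY
    (stronglyMeasurable_const.indicator hS) ((integrable_const (1 : ℝ)).indicator hS)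
  have hfiber : ∀ x, ∫ y, S.indicator (fun _ => (1 : ℝ)) (x, y) ∂σ = σ.real (Prod.mk x ⁻¹' S) :=
    fun x => integral_indicator_one (measurable_prodMk_left hS)
  calc ∫ ω, (μ[fun ω => S.indicator (fun _ => (1 : ℝ)) (X ω, Y ω) | mα.comap X] ω) ^ 2 ∂μ
      = ∫ ω, σ.real (Prod.mk (X ω) ⁻¹' S) ^ 2 ∂μ :=
        integral_congr_ae (hcond.mono fun ω h => by simp only [h, hfiber])
    _ = ∫ x, σ.real (Prod.mk x ⁻¹' S) ^ 2 ∂ρ := by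
        rw [← hρ, integral_map hX.aemeasurable]
        exact (hσS.ennreal_toReal.pow_const 2).aestronglyMeasurable
    _ = ((ρ.prod σ).prod (ρ.prod σ)).real {p | p.1 ∈ S ∧ (p.1.1, p.2.2) ∈ S} := by
        simp_rw [measureReal_def, ← ENNReal.toReal_pow]
        rw [integral_toReal (hσS.pow_const 2).aemeasurable
          (Filter.Eventually.of_forall fun _ => by finiteness),
          measure_pickFreeze_eq_lintegral_sq hS]
    _ = (μ.prod μ).real {p | (X p.1, Y p.1) ∈ S ∧ (X p.1, Y p.2) ∈ S} :=
        ((hXYmp.prod hXYmp).measureReal_preimage hT.nullMeasurableSet).symm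

end PickFreeze

section PiPickFreeze

variable {ι : Type*} [DecidableEq ι] {E : ι → Type*} [∀ i, MeasurableSpace (E i)]

theorem piEquivPiSubtypeProd_symm_piecewise (s : Finset ι) (u u' : ∀ i, E i) :
    (MeasurableEquiv.piEquivPiSubtypeProd E (· ∈ s)).symm
      (fun j : s => u j, fun j : {j // j ∉ s} => u' j) = s.piecewise u u' := by
  ext i
  by_cases hi : i ∈ s <;> simp [hi]

theorem integral_condExp_indicator_sq_pi [Fintype ι] [∀ i, StandardBorelSpace (E i)]
    (P : ∀ i, Measure (E i)) [∀ i, IsProbabilityMeasure (P i)] (s : Finset ι)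
    {F : Set (∀ i, E i)} (hF : MeasurableSet F) :
    ∫ u, ((Measure.pi P)[F.indicator (fun _ => (1 : ℝ)) |
        MeasurableSpace.comap (fun u (j : s) => u j) inferInstance] u) ^ 2 ∂(Measure.pi P) =
      ((Measure.pi P).prod (Measure.pi P)).real {p | p.1 ∈ F ∧ s.piecewise p.1 p.2 ∈ F} := by
  let e := MeasurableEquiv.piEquivPiSubtypeProd E (· ∈ s)
  have hX : Measurable fun (u : ∀ i, E i) (j : s) => u j :=
    measurable_pi_lambda _ fun _ => measurable_pi_apply _
  have hY : Measurable fun (u : ∀ i, E i) (j : {j // j ∉ s}) => u j :=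
    measurable_pi_lambda _ fun _ => measurable_pi_apply _
  have hindicator : F.indicator (fun _ => (1 : ℝ)) = fun u => (e.symm ⁻¹' F).indicator
      (fun _ => (1 : ℝ)) (fun j : s => u j, fun j : {j // j ∉ s} => u j) := by
    ext u
    by_cases hu : u ∈ F <;> simp [hu, e]
  rw [hindicator, integral_condExp_indicator_sq hX hY
    (measurePreserving_piEquivPiSubtypeProd P (· ∈ s)).map_eq (e.symm.measurable hF)]
  congr 1
  ext p
  simp only [Set.mem_ofPred_eq, Set.mem_preimage, e, piEquivPiSubtypeProd_symm_piecewise,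
    Finset.piecewise_same]

end PiPickFreeze

section Gaussian

theorem measurableSet_setOf_mulVec_le {κ ι : Type*} [Fintype ι] (M : Matrix κ ι ℝ) (c : κ → ℝ) :
    MeasurableSet {w | ∀ i, (M *ᵥ w) i ≤ c i} :=
  (isClosed_le (continuous_const.matrix_mulVec continuous_id) continuous_const).measurableSet

theorem measurableSet_setOf_le_mulVec {κ ι : Type*} [Fintype ι] (M : Matrix κ ι ℝ) (c : κ → ℝ) :
    MeasurableSet {w | ∀ i, c i ≤ (M *ᵥ w) i} :=
  (isClosed_le continuous_const (continuous_const.matrix_mulVec continuous_id)).measurableSet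

theorem measurePreserving_neg_stdGaussian (ι : Type*) [Fintype ι] :
    MeasurePreserving (fun w => -w) (stdGaussian ι) (stdGaussian ι) :=
  measurePreserving_pi _ _ (f := fun _ x => -x) fun _ =>
    ⟨measurable_neg, by rw [gaussianReal_map_neg, neg_zero]⟩

theorem measurePreserving_sumElim_stdGaussian (ι ι' : Type*) [Fintype ι] [Fintype ι'] :
    MeasurePreserving (fun p => Sum.elim p.1 p.2) ((stdGaussian ι).prod (stdGaussian ι'))
      (stdGaussian (ι ⊕ ι')) :=
  measurePreserving_sumPiEquivProdPi_symm fun _ => gaussianReal 0 1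

variable {m n : ℕ} (A : Matrix (Fin m) (Fin n) ℝ) (β : Fin m → ℝ) (v : Finset (Fin n))

def parallelFailureSet : Set (Fin n → ℝ) :=
  {u | ∀ i, β i ≤ (A *ᵥ u) i}

theorem Mblock_mulVec_sumElim (u u' : Fin n → ℝ) :
    Mblock m n A v *ᵥ Sum.elim u u' = Sum.elim (A *ᵥ u) (A *ᵥ v.piecewise u u') := by
  ext (i | i) <;> simp only [Matrix.mulVec, dotProduct, Fintype.sum_sum_type, Sum.elim_inl,
    Sum.elim_inr]
  · simp [Mblock]
  · rw [← Finset.sum_add_distrib]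
    refine Finset.sum_congr rfl fun j _ => ?_
    by_cases hj : j ∈ v <;> simp [Mblock, hj]

theorem stdGaussian_Mblock_mulVec_le :
    stdGaussian (Fin n ⊕ Fin n)
        {w | ∀ i, (Mblock m n A v *ᵥ w) i ≤ Sum.elim (fun k => -β k) (fun k => -β k) i} =
      ((stdGaussian (Fin n)).prod (stdGaussian (Fin n)))
        {p | p.1 ∈ parallelFailureSet A β ∧ v.piecewise p.1 p.2 ∈ parallelFailureSet A β} := by
  have hpre : (fun p : (Fin n → ℝ) × (Fin n → ℝ) => Sum.elim p.1 p.2) ⁻¹' ((fun w => -w) ⁻¹'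
      {w | ∀ i, (Mblock m n A v *ᵥ w) i ≤ Sum.elim (fun k => -β k) (fun k => -β k) i}) =
      {p | p.1 ∈ parallelFailureSet A β ∧ v.piecewise p.1 p.2 ∈ parallelFailureSet A β} := by
    ext p
    simp [parallelFailureSet, Matrix.mulVec_neg, Sum.forall, Mblock_mulVec_sumElim]
  have hmeas := measurableSet_setOf_mulVec_le (Mblock m n A v)
    (Sum.elim (fun k => -β k) (fun k => -β k))
  rw [← hpre, (measurePreserving_sumElim_stdGaussian _ _).measure_preimage
    (measurable_neg hmeas).nullMeasurableSet,
    (measurePreserving_neg_stdGaussian _).measure_preimage hmeas.nullMeasurableSet]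

end Gaussian

theorem stmt11_general (m n : ℕ) (A : Matrix (Fin m) (Fin n) ℝ)
    (β : Fin m → ℝ) (v : Finset (Fin n)) :
    let μ := stdGaussian (Fin n)
    let Fpar := {u : Fin n → ℝ | ∀ i, β i ≤ A.mulVec u i}
    let mV : MeasurableSpace (Fin n → ℝ) :=
      MeasurableSpace.comap (fun u (j : {x // x ∈ v}) => u j) inferInstance
    (∫ u, ((μ[Fpar.indicator (fun _ => (1 : ℝ)) | mV]) u) ^ 2 ∂μ) =
      ((stdGaussian (Fin n ⊕ Fin n))
        {w | ∀ i, (Mblock m n A v).mulVec w i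
            ≤ Sum.elim (fun k => -β k) (fun k => -β k) i}).toReal := by
  intro μ Fpar mV
  rw [stdGaussian_Mblock_mulVec_le]
  exact integral_condExp_indicator_sq_pi (fun _ => gaussianReal 0 1) v
    (measurableSet_setOf_le_mulVec A β)

/-- Pick-freeze identity for the parallel system `F_par = ∩ᵢ {αᵢᵀU ≥ βᵢ}`:
`E[P(F_par | U_v)²] = Φ_{2m}(−[B; B]; [[R, R_v], [R_v, R]])`. -/
theorem stmt11 (m n : ℕ) (A : Matrix (Fin m) (Fin n) ℝ) (hA : ∀ i, ∑ j, (A i j) ^ 2 = 1)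
    (β : Fin m → ℝ) (v : Finset (Fin n)) :
    let μ := stdGaussian (Fin n)
    let Fpar := {u : Fin n → ℝ | ∀ i, β i ≤ A.mulVec u i}
    let mV : MeasurableSpace (Fin n → ℝ) :=
      MeasurableSpace.comap (fun u (j : {x // x ∈ v}) => u j) inferInstance
    (∫ u, ((μ[Fpar.indicator (fun _ => (1 : ℝ)) | mV]) u) ^ 2 ∂μ) =
      ((stdGaussian (Fin n ⊕ Fin n))
        {w | ∀ i, (Mblock m n A v).mulVec w i
            ≤ Sum.elim (fun k => -β k) (fun k => -β k) i}).toReal :=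
  stmt11_general m n A β v
end

section
/- With the setup of a series system of m linear limit states, F_ser = ∪_{i=1}^m {αᵢᵀU ≥ βᵢ}, the variance of the conditional expectation of the failure indicator given U_v is Var(E[1_{F_ser} | U_v]) = Φ_{2m}([B;B]; [[R, R_v],[R_v, R]]) − (1 − P(F_ser))², where P(F_ser) = 1 − Φ_m(B; R). -/
/-!
Write `x_v y_{vᶜ}` for the vector taking the coordinates in `v` from `x` and the others from `y`.
Because the coordinates of `U` are independent, `(x, y) ↦ x_v y_{vᶜ}` maps `μ ⊗ μ` to `μ`, and
`E[1_F | U_v](x) = ∫ 1_F(x_v y_{vᶜ}) dμ(y)`. Hence `E[E[1_F | U_v]²] = P(U ∈ F, U' ∈ F)` with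
`U' = U_v Y_{vᶜ}` for an independent copy `Y`; the pair `(U, U')` is the image of a `2n`-dimensional
standard Gaussian under `Mblock`. The hyperplanes `αᵢᵀu = βᵢ` are Gaussian-null, so the safe set
`{AU ≤ B}` is a.e. the complement of `F_ser`, and inclusion–exclusion gives
`P(U ∉ F, U' ∉ F) = 1 − 2 P(F) + P(U ∈ F, U' ∈ F)`.
-/

open MeasureTheory ProbabilityTheory

theorem Fintype.sum_mul_update {ι : Type*} [Fintype ι] [DecidableEq ι] (c x : ι → ℝ) (j : ι)
    (t : ℝ) :
    ∑ k, c k * Function.update x j t k = c j * t + ∑ k ∈ Finset.univ.erase j, c k * x k := by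
  rw [← Finset.add_sum_erase _ _ (Finset.mem_univ j), Function.update_self]
  congr 1
  refine Finset.sum_congr rfl fun k hk => ?_
  rw [Function.update_of_ne (Finset.ne_of_mem_erase hk)]

theorem MeasureTheory.Measure.pi_sum_mul_hyperplane {ι : Type*} [Fintype ι] [DecidableEq ι]
    (μ : ι → Measure ℝ) [∀ i, SigmaFinite (μ i)] {c : ι → ℝ} {j : ι} (hj : c j ≠ 0)
    [NullSingletonClass (μ j)] (b : ℝ) :
    Measure.pi μ {u | ∑ k, c k * u k = b} = 0 := by
  set S := {u : ι → ℝ | ∑ k, c k * u k = b}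
  have hS : MeasurableSet S := measurableSet_eq_fun (by fun_prop) measurable_const
  -- Integrate over the `j`-th coordinate first: each such line meets `S` in at most one point.
  have hslice : ∀ x : ι → ℝ, ∫⁻ t, S.indicator 1 (Function.update x j t) ∂μ j = 0 := by
    intro x
    have hsub : (Function.update x j ⁻¹' S).Subsingleton := by
      intro t₁ h₁ t₂ h₂
      simp only [Set.mem_preimage, S, Set.mem_ofPred_eq, Fintype.sum_mul_update] at h₁ h₂
      exact mul_left_cancel₀ hj (by linarith)
    change ∫⁻ t, (Function.update x j ⁻¹' S).indicator 1 t ∂μ j = 0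
    rw [lintegral_indicator_one (measurable_update x hS), hsub.measure_zero]
  rw [← lintegral_indicator_one hS, lintegral_eq_lmarginal_univ (0 : ι → ℝ),
    lmarginal_erase' _ (measurable_one.indicator hS) (Finset.mem_univ j)]
  simp [hslice, lmarginal]

theorem Finset.piecewise_eq_updateFinset_restrict {ι : Type*} [DecidableEq ι] {α : ι → Type*}
    (s : Finset ι) (x y : ∀ i, α i) :
    s.piecewise x y = Function.updateFinset y s (s.restrict x) := by
  ext i
  simp [Finset.piecewise, Function.updateFinset]

theorem Finset.restrict_piecewise {ι : Type*} [DecidableEq ι] {α : ι → Type*}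
    (s : Finset ι) (x y : ∀ i, α i) : s.restrict (s.piecewise x y) = s.restrict x := by
  ext ⟨i, hi⟩
  simp [hi]

theorem norm_indicator_one_le {X : Type*} (S : Set X) (x : X) :
    ‖S.indicator (fun _ => (1 : ℝ)) x‖ ≤ 1 := by
  by_cases hx : x ∈ S <;> simp [hx]

section Resample

variable {ι : Type*} [DecidableEq ι] {α : ι → Type*} [∀ i, MeasurableSpace (α i)]

@[fun_prop]
theorem measurable_piecewise_prod (s : Finset ι) :
    Measurable fun p : (∀ i, α i) × (∀ i, α i) => s.piecewise p.1 p.2 := by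
  simp_rw [Finset.piecewise_eq_updateFinset_restrict]
  exact measurable_updateFinset'.comp
    (measurable_snd.prodMk (s.measurable_restrict.comp measurable_fst))

theorem measurePreserving_piecewise [Fintype ι] (μ : ∀ i, Measure (α i))
    [∀ i, IsProbabilityMeasure (μ i)] (s : Finset ι) :
    MeasurePreserving (fun p : (∀ i, α i) × (∀ i, α i) => s.piecewise p.1 p.2)
      ((Measure.pi μ).prod (Measure.pi μ)) (Measure.pi μ) where
  measurable := measurable_piecewise_prod s
  map_eq := by
    refine (Measure.pi_eq fun t ht => ?_).symm
    rw [Measure.map_apply (measurable_piecewise_prod s) (MeasurableSet.univ_pi ht)]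
    have hbox : (fun p : (∀ i, α i) × (∀ i, α i) => s.piecewise p.1 p.2) ⁻¹' Set.univ.pi t =
        Set.univ.pi (fun i => if i ∈ s then t i else Set.univ) ×ˢ
          Set.univ.pi (fun i => if i ∈ s then Set.univ else t i) := by
      ext p
      simp only [Set.mem_preimage, Set.mem_pi, Set.mem_univ, true_implies, Set.mem_prod,
        Finset.piecewise, ← forall_and]
      refine forall_congr' fun i => ?_
      by_cases hi : i ∈ s <;> simp [hi]
    rw [hbox, Measure.prod_prod, Measure.pi_pi, Measure.pi_pi, ← Finset.prod_mul_distrib]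
    refine Finset.prod_congr rfl fun i _ => ?_
    by_cases hi : i ∈ s <;> simp [hi]

variable {P : Measure (∀ i, α i)} {s : Finset ι}

noncomputable def integralOutside (P : Measure (∀ i, α i)) (s : Finset ι)
    (f : (∀ i, α i) → ℝ) (x : ∀ i, α i) : ℝ :=
  ∫ y, f (s.piecewise x y) ∂P

theorem integralOutside_piecewise (f : (∀ i, α i) → ℝ) (x y : ∀ i, α i) :
    integralOutside P s f (s.piecewise x y) = integralOutside P s f x := by
  simp [integralOutside]

theorem stronglyMeasurable_comap_integralOutside [SFinite P] {f : (∀ i, α i) → ℝ}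
    (hf : StronglyMeasurable f) :
    StronglyMeasurable[.comap s.restrict inferInstance] (integralOutside P s f) := by
  have hfactor : integralOutside P s f =
      (fun z => ∫ y, f (Function.updateFinset y s z) ∂P) ∘ s.restrict := by
    ext x
    simp only [integralOutside, Function.comp_apply, Finset.piecewise_eq_updateFinset_restrict]
  rw [hfactor]
  exact (hf.comp_measurable (measurable_updateFinset'.comp measurable_swap)).integral_prod_right'
    |>.comp_measurable (comap_measurable _)

theorem integral_mul_integralOutside [SFinite P] {χ f : (∀ i, α i) → ℝ}
    (h : Integrable (fun p : (∀ i, α i) × (∀ i, α i) => χ p.1 * f (s.piecewise p.1 p.2))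
      (P.prod P)) :
    ∫ x, χ x * integralOutside P s f x ∂P =
      ∫ p, χ p.1 * f (s.piecewise p.1 p.2) ∂(P.prod P) := by
  simp_rw [integralOutside, ← integral_const_mul]
  exact integral_integral h

theorem integral_mul_integralOutside_of_invariant [SFinite P]
    (hP : MeasurePreserving (fun p : (∀ i, α i) × (∀ i, α i) => s.piecewise p.1 p.2)
      (P.prod P) P)
    {χ f : (∀ i, α i) → ℝ} (hχ : ∀ x y, χ (s.piecewise x y) = χ x) (h : Integrable (χ * f) P) :
    ∫ x, χ x * integralOutside P s f x ∂P = ∫ x, χ x * f x ∂P := by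
  have hcomp : (fun p : (∀ i, α i) × (∀ i, α i) => χ p.1 * f (s.piecewise p.1 p.2)) =
      (χ * f) ∘ fun p => s.piecewise p.1 p.2 := by
    ext p
    simp [hχ]
  have hint : Integrable ((χ * f) ∘ fun p => s.piecewise p.1 p.2) (P.prod P) :=
    (hP.integrable_comp h.aestronglyMeasurable).2 h
  calc ∫ x, χ x * integralOutside P s f x ∂P
      = ∫ p, (χ * f) (s.piecewise p.1 p.2) ∂(P.prod P) := by
        rw [integral_mul_integralOutside (hcomp ▸ hint), hcomp]
        rfl
    _ = ∫ x, (χ * f) x ∂P := by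
        conv_rhs => rw [← hP.map_eq]
        exact (integral_map hP.measurable.aemeasurable
          (by rw [hP.map_eq]; exact h.aestronglyMeasurable)).symm

theorem condExp_comap_restrict_ae_eq [IsFiniteMeasure P]
    (hP : MeasurePreserving (fun p : (∀ i, α i) × (∀ i, α i) => s.piecewise p.1 p.2)
      (P.prod P) P)
    {f : (∀ i, α i) → ℝ} (hf : StronglyMeasurable f) (hfi : Integrable f P) :
    P[f | .comap s.restrict inferInstance] =ᵐ[P] integralOutside P s f := by
  have hm : MeasurableSpace.comap (s.restrict (π := α)) inferInstance ≤ MeasurableSpace.pi :=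
    s.measurable_restrict.comap_le
  have hgi : Integrable (integralOutside P s f) P :=
    ((hP.integrable_comp hfi.aestronglyMeasurable).2 hfi).integral_prod_left
  refine (ae_eq_condExp_of_forall_setIntegral_eq hm hfi (fun _ _ _ => hgi.integrableOn) ?_
    (stronglyMeasurable_comap_integralOutside hf).aestronglyMeasurable).symm
  rintro _ ⟨t, ht, rfl⟩ -
  have hS : MeasurableSet (s.restrict ⁻¹' t) := s.measurable_restrict ht
  have hind : ∀ g : (∀ i, α i) → ℝ,
      ∫ x in s.restrict ⁻¹' t, g x ∂P = ∫ x, (s.restrict ⁻¹' t).indicator 1 x * g x ∂P := by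
    intro g
    rw [← integral_indicator hS]
    congr 1 with x
    by_cases hx : x ∈ s.restrict ⁻¹' t <;> simp [hx]
  rw [hind, hind]
  refine integral_mul_integralOutside_of_invariant hP (fun x y => ?_) ?_
  · have hmem : s.piecewise x y ∈ s.restrict ⁻¹' t ↔ x ∈ s.restrict ⁻¹' t := by
      rw [Set.mem_preimage, Set.mem_preimage, Finset.restrict_piecewise]
    by_cases hx : x ∈ s.restrict ⁻¹' t
    · simp [Set.indicator_of_mem hx, Set.indicator_of_mem (hmem.2 hx)]
    · simp [Set.indicator_of_notMem hx, Set.indicator_of_notMem (mt hmem.1 hx)]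
  · exact hfi.bdd_mul (measurable_one.indicator hS).aestronglyMeasurable
      (ae_of_all _ (norm_indicator_one_le _))

theorem variance_condExp_indicator_comap_restrict [IsProbabilityMeasure P]
    (hP : MeasurePreserving (fun p : (∀ i, α i) × (∀ i, α i) => s.piecewise p.1 p.2)
      (P.prod P) P)
    {F : Set (∀ i, α i)} (hF : MeasurableSet F) :
    Var[P[F.indicator fun _ => 1 | .comap s.restrict inferInstance]; P] =
      (P.prod P).real {p | p.1 ∈ F ∧ s.piecewise p.1 p.2 ∈ F} - P.real F ^ 2 := by
  set f : (∀ i, α i) → ℝ := F.indicator fun _ => 1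
  set g := integralOutside P s f
  set D := {p : (∀ i, α i) × (∀ i, α i) | p.1 ∈ F ∧ s.piecewise p.1 p.2 ∈ F}
  have hD : MeasurableSet D := (measurable_fst hF).inter (hP.measurable hF)
  have hf : StronglyMeasurable f := (measurable_one.indicator hF).stronglyMeasurable
  have hfi : Integrable f P := (integrable_const 1).indicator hF
  have hg : StronglyMeasurable g :=
    (stronglyMeasurable_comap_integralOutside hf).mono s.measurable_restrict.comap_le
  have hg_le : ∀ x, ‖g x‖ ≤ 1 := fun x => by
    simpa [g, integralOutside] using norm_integral_le_of_norm_le_const (μ := P)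
      (ae_of_all _ fun y => norm_indicator_one_le F (s.piecewise x y))
  have hfD :
      (fun p : (∀ i, α i) × (∀ i, α i) => f p.1 * f (s.piecewise p.1 p.2)) = D.indicator 1 :=
    (Set.inter_indicator_one (M₀ := ℝ) (s := Prod.fst ⁻¹' F)
      (t := (fun p : (∀ i, α i) × (∀ i, α i) => s.piecewise p.1 p.2) ⁻¹' F)).symm
  have hmean : ∫ x, g x ∂P = P.real F := by
    have h := integral_mul_integralOutside_of_invariant hP (χ := 1) (fun _ _ => rfl)
      (by simpa using hfi)
    simp only [Pi.one_apply, one_mul] at h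
    exact h.trans (integral_indicator_one hF)
  have hsq : ∫ x, g x ^ 2 ∂P = (P.prod P).real D :=
    calc ∫ x, g x ^ 2 ∂P
        = ∫ x, g x * f x ∂P := by
          simp_rw [sq]
          exact integral_mul_integralOutside_of_invariant hP (integralOutside_piecewise f)
            (hfi.bdd_mul hg.aestronglyMeasurable (ae_of_all _ hg_le))
      _ = ∫ p, f p.1 * f (s.piecewise p.1 p.2) ∂(P.prod P) := by
          simp_rw [mul_comm (g _)]
          exact integral_mul_integralOutside (hfD ▸ (integrable_const 1).indicator hD)
      _ = (P.prod P).real D := by rw [hfD, integral_indicator_one hD]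
  rw [variance_congr (condExp_comap_restrict_ae_eq hP hf hfi),
    variance_eq_sub (MemLp.of_bound hg.aestronglyMeasurable 1 (ae_of_all _ hg_le)), hmean, ← hsq]
  rfl

theorem measureReal_piecewise_mem_of_ae_eq_compl [IsProbabilityMeasure P]
    (hP : MeasurePreserving (fun p : (∀ i, α i) × (∀ i, α i) => s.piecewise p.1 p.2)
      (P.prod P) P)
    {F C : Set (∀ i, α i)} (hF : MeasurableSet F) (hC : C =ᵐ[P] Fᶜ) :
    (P.prod P).real {p | p.1 ∈ C ∧ s.piecewise p.1 p.2 ∈ C} =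
      1 - 2 * P.real F + (P.prod P).real {p | p.1 ∈ F ∧ s.piecewise p.1 p.2 ∈ F} := by
  set E₁ : Set ((∀ i, α i) × (∀ i, α i)) := Prod.fst ⁻¹' F
  set E₂ : Set ((∀ i, α i) × (∀ i, α i)) := (fun p => s.piecewise p.1 p.2) ⁻¹' F
  have hae : {p | p.1 ∈ C ∧ s.piecewise p.1 p.2 ∈ C} =ᵐ[P.prod P] ((E₁ ∪ E₂)ᶜ : Set _) := by
    rw [Set.compl_union]
    exact (measurePreserving_fst.quasiMeasurePreserving.preimage_ae_eq hC).inter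
      (hP.quasiMeasurePreserving.preimage_ae_eq hC)
  have h₁ : (P.prod P).real E₁ = P.real F :=
    measurePreserving_fst.measureReal_preimage hF.nullMeasurableSet
  have h₂ : (P.prod P).real E₂ = P.real F := hP.measureReal_preimage hF.nullMeasurableSet
  have hE₂ : MeasurableSet E₂ := hP.measurable hF
  have h_union := measureReal_union_add_inter (μ := P.prod P) (s := E₁) hE₂
  rw [measureReal_congr hae, probReal_compl_eq_one_sub ((measurable_fst hF).union hE₂)]
  change _ = 1 - 2 * P.real F + (P.prod P).real (E₁ ∩ E₂)
  linarith

end Resample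

instance (ι : Type*) [Fintype ι] : IsProbabilityMeasure (stdGaussian ι) := by
  unfold _root_.stdGaussian
  infer_instance

theorem stdGaussian_setOf_mulVec_eq {κ ι : Type*} [Fintype ι] (A : Matrix κ ι ℝ) {i : κ}
    (hA : A i ≠ 0) (b : ℝ) : stdGaussian ι {u | A.mulVec u i = b} = 0 := by
  classical
  obtain ⟨j, hj⟩ := Function.ne_iff.1 hA
  have := nullSingletonClass_gaussianReal (μ := 0) one_ne_zero
  unfold _root_.stdGaussian
  simpa [Matrix.mulVec, dotProduct] using
    Measure.pi_sum_mul_hyperplane (fun _ => gaussianReal 0 1) hj b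

theorem stdGaussian_setOf_forall_mulVec_le_ae_eq {κ ι : Type*} [Finite κ] [Fintype ι]
    (A : Matrix κ ι ℝ) (hA : ∀ i, A i ≠ 0) (β : κ → ℝ) :
    ({u | ∀ i, A.mulVec u i ≤ β i} : Set (ι → ℝ)) =ᵐ[stdGaussian ι]
      ({u | ∀ i, A.mulVec u i < β i} : Set (ι → ℝ)) := by
  rw [ae_eq_set]
  constructor
  · refine measure_mono_null (fun u ⟨hle, hlt⟩ => ?_)
      (measure_iUnion_null fun i => stdGaussian_setOf_mulVec_eq A (hA i) (β i))
    obtain ⟨i, hi⟩ := not_forall.1 hlt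
    exact Set.mem_iUnion.2 ⟨i, le_antisymm (hle i) (not_lt.1 hi)⟩
  · rw [Set.sdiff_eq_empty.2 fun u hu i => (hu i).le, measure_empty]

section Mblock

variable {m n : ℕ} (A : Matrix (Fin m) (Fin n) ℝ) (v : Finset (Fin n))

theorem Mblock_mulVec_inl (w : Fin n ⊕ Fin n → ℝ) (i : Fin m) :
    (Mblock m n A v).mulVec w (.inl i) = A.mulVec (fun j => w (.inl j)) i := by
  simp [Matrix.mulVec, dotProduct, Fintype.sum_sum_type, Mblock]

theorem Mblock_mulVec_inr (w : Fin n ⊕ Fin n → ℝ) (i : Fin m) :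
    (Mblock m n A v).mulVec w (.inr i) =
      A.mulVec (v.piecewise (fun j => w (.inl j)) (fun j => w (.inr j))) i := by
  simp only [Matrix.mulVec, dotProduct, Fintype.sum_sum_type, ← Finset.sum_add_distrib]
  refine Finset.sum_congr rfl fun j _ => ?_
  by_cases hj : j ∈ v <;> simp [Mblock, hj]

theorem stdGaussian_setOf_Mblock_mulVec_le (β : Fin m → ℝ) :
    (stdGaussian (Fin n ⊕ Fin n)).real {w | ∀ i, (Mblock m n A v).mulVec w i ≤ Sum.elim β β i} =
      ((stdGaussian (Fin n)).prod (stdGaussian (Fin n))).real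
        {p | p.1 ∈ {u | ∀ i, A.mulVec u i ≤ β i} ∧
          v.piecewise p.1 p.2 ∈ {u | ∀ i, A.mulVec u i ≤ β i}} := by
  unfold Measure.real _root_.stdGaussian
  rw [← (measurePreserving_sumPiEquivProdPi fun _ => gaussianReal 0 1).measure_preimage_equiv]
  congr 2
  ext w
  simp only [Set.mem_preimage, Set.mem_ofPred_eq, Sum.forall, Sum.elim_inl, Sum.elim_inr,
    Mblock_mulVec_inl, Mblock_mulVec_inr]
  rfl

end Mblock

/-- For the series system `F_ser = ∪ᵢ {αᵢᵀU ≥ βᵢ}` one has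
`Var(E[1_{F_ser} | U_v]) = Φ_{2m}([B;B]; [[R, R_v],[R_v, R]]) − (1 − P(F_ser))²`,
where `P(F_ser) = 1 − Φ_m(B; R)`. -/
theorem stmt13 (m n : ℕ) (A : Matrix (Fin m) (Fin n) ℝ) (hA : ∀ i, ∑ j, (A i j) ^ 2 = 1)
    (β : Fin m → ℝ) (v : Finset (Fin n)) :
    let μ := stdGaussian (Fin n)
    let Fser := {u : Fin n → ℝ | ∃ i, β i ≤ A.mulVec u i}
    let mV : MeasurableSpace (Fin n → ℝ) :=
      MeasurableSpace.comap (fun u (j : {x // x ∈ v}) => u j) inferInstance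
    let PhiM : ℝ := (μ {u | ∀ i, A.mulVec u i ≤ β i}).toReal
    variance (μ[Fser.indicator (fun _ => (1 : ℝ)) | mV]) μ =
        ((stdGaussian (Fin n ⊕ Fin n))
          {w | ∀ i, (Mblock m n A v).mulVec w i
              ≤ Sum.elim (fun k => β k) (fun k => β k) i}).toReal
          - (1 - (μ Fser).toReal) ^ 2
      ∧ (μ Fser).toReal = 1 - PhiM := by
  intro μ Fser
  have hrows : ∀ i, A i ≠ 0 := fun i hi => by simpa [hi] using hA i
  have hFser : Fser = {u | ∀ i, A.mulVec u i < β i}ᶜ := by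
    ext u
    simp [Fser]
  have hF : MeasurableSet Fser := by
    rw [hFser, Set.ofPred_forall]
    exact (MeasurableSet.iInter fun i => measurableSet_lt (by fun_prop) measurable_const).compl
  have hC : ({u | ∀ i, A.mulVec u i ≤ β i} : Set (Fin n → ℝ)) =ᵐ[μ] (Fserᶜ : Set _) := by
    rw [hFser, compl_compl]
    exact stdGaussian_setOf_forall_mulVec_le_ae_eq A hrows β
  have hP : MeasurePreserving (fun p : (Fin n → ℝ) × (Fin n → ℝ) => v.piecewise p.1 p.2)
      (μ.prod μ) μ :=
    measurePreserving_piecewise _ v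
  refine ⟨?_, ?_⟩ <;> simp only [← measureReal_def]
  · rw [show MeasurableSpace.comap (fun u (j : {x // x ∈ v}) => u j) inferInstance =
        .comap v.restrict inferInstance from rfl,
      variance_condExp_indicator_comap_restrict hP hF, stdGaussian_setOf_Mblock_mulVec_le,
      measureReal_piecewise_mem_of_ae_eq_compl hP hF hC]
    ring
  · rw [measureReal_congr hC, probReal_compl_eq_one_sub hF]
    ring
end
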